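/- Let G be a finite 2-group which is a non-trivial OC-group. Then the quotient Z_3(G)/Z(G) is not cyclic. -/

import Mathlib

/-!
In an OC-group every noncentral `x` is conjugate to `x⁻¹`, say `g x g⁻¹ = x⁻¹`, so
`x ^ 2 = ⁅x, g⁆`: squaring maps `Z_{k+1} \ Z` into `Z_k`. Moreover a normal subgroup containing
one noncentral element of some order contains all of them.

If `Z₃/Z` is cyclic, its generator `w` has order `4` modulo `Z`, and `Z₃` is order closed: it has
exponent `2 ^ e = |w|` and contains every noncentral element of order `4, …, 2 ^ e`. This
propagates to every `Z_k` with `k ≥ 3` and forces the elements of `Z_{k+1} \ Z_k` to have order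
`2` or `2 ^ (e + 1)`. As conjugates of `x ∈ Z_{k+1}` lie in `x Z_k`, if `Z_{k+1} = G` then
`G / Z_k` has at most three elements, so it is cyclic and `Z_k = G`. Hence the upper central
series never reaches `G`, although the `2`-group `G` is nilpotent.
-/

section

open QuotientGroup

theorem Nat.dvd_two_pow_or_eq_of_dvd_two_pow_succ {d e : ℕ} (h : d ∣ 2 ^ (e + 1)) :
    d ∣ 2 ^ e ∨ d = 2 ^ (e + 1) := by
  obtain ⟨j, hj, rfl⟩ := (Nat.dvd_prime_pow Nat.prime_two).mp h
  rcases Nat.lt_or_ge j (e + 1) with hlt | hge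
  · exact Or.inl (pow_dvd_pow 2 (by omega))
  · exact Or.inr (by rw [le_antisymm hj hge])

theorem Nat.eq_two_of_dvd_two_pow {d e : ℕ} (h : d ∣ 2 ^ e) (h4 : ¬ 4 ∣ d) (h1 : d ≠ 1) :
    d = 2 := by
  obtain ⟨j, -, rfl⟩ := (Nat.dvd_prime_pow Nat.prime_two).mp h
  rcases j with _ | _ | j
  · exact absurd rfl h1
  · rfl
  · exact absurd ⟨2 ^ j, by ring⟩ h4

namespace Subgroup

variable {G : Type*} [Group G]

theorem two_lt_card_of_bot_lt_of_lt [Finite G] {H K : Subgroup G} (hH : ⊥ < H) (hHK : H < K) :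
    2 < Nat.card K := by
  have h1 : 1 < Nat.card H := H.one_lt_card_iff_ne_bot.mpr hH.ne'
  have h2 : Nat.card H < Nat.card K := by
    have := Set.ncard_lt_ncard (SetLike.coe_ssubset_coe.mpr hHK)
    rwa [← Nat.card_coe_set_eq, ← Nat.card_coe_set_eq] at this
  omega

theorem mem_upperCentralSeries_succ_iff_mk_mem_center {n : ℕ} {x : G} :
    x ∈ upperCentralSeries G (n + 1) ↔
      (x : G ⧸ upperCentralSeries G n) ∈ center (G ⧸ upperCentralSeries G n) :=
  SetLike.ext_iff.mp (upperCentralSeriesStep_eq_comap_center (upperCentralSeries G n)) x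

theorem center_le_upperCentralSeries {n : ℕ} (hn : 1 ≤ n) : center G ≤ upperCentralSeries G n :=
  upperCentralSeries_one G ▸ upperCentralSeries_mono G hn

theorem _root_.IsConj.mk_eq_of_mem_upperCentralSeries_succ {n : ℕ} {x y : G} (hxy : IsConj x y)
    (hx : x ∈ upperCentralSeries G (n + 1)) : (y : G ⧸ upperCentralSeries G n) = x := by
  obtain ⟨g, rfl⟩ := isConj_iff.mp hxy
  have hc := mem_center_iff.mp (mem_upperCentralSeries_succ_iff_mk_mem_center.mp hx) g
  rw [QuotientGroup.mk_mul, QuotientGroup.mk_mul, QuotientGroup.mk_inv, hc, mul_inv_cancel_right]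

theorem upperCentralSeries_succ_eq_top_of_isCyclic (n : ℕ)
    [IsCyclic (G ⧸ upperCentralSeries G (n + 1))] : upperCentralSeries G (n + 1) = ⊤ := by
  let f : G ⧸ upperCentralSeries G n →* G ⧸ upperCentralSeries G (n + 1) :=
    QuotientGroup.map _ _ (MonoidHom.id G) (upperCentralSeries_mono G n.le_succ)
  have hker : f.ker ≤ center (G ⧸ upperCentralSeries G n) := by
    rintro ⟨x⟩ hx
    exact mem_upperCentralSeries_succ_iff_mk_mem_center.mp ((QuotientGroup.eq_one_iff x).mp hx)
  have := f.isMulCommutative_of_isCyclic_of_ker_le_center hker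
  refine eq_top_iff.mpr fun x _ => mem_upperCentralSeries_succ_iff_mk_mem_center.mpr ?_
  rw [center_eq_top]
  exact mem_top _

theorem upperCentralSeries_succ_eq_top_of_card_quotient_le_three [Finite G] (n : ℕ)
    (h : Nat.card (G ⧸ upperCentralSeries G (n + 1)) ≤ 3) : upperCentralSeries G (n + 1) = ⊤ := by
  by_contra hne
  have h2 : 2 ≤ Nat.card (G ⧸ upperCentralSeries G (n + 1)) := by
    have h0 : Nat.card (G ⧸ upperCentralSeries G (n + 1)) ≠ 0 := index_ne_zero_of_finite
    have h1 : Nat.card (G ⧸ upperCentralSeries G (n + 1)) ≠ 1 := fun h1 => hne (index_eq_one.mp h1)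
    omega
  have : IsCyclic (G ⧸ upperCentralSeries G (n + 1)) := by
    interval_cases hcard : Nat.card (G ⧸ upperCentralSeries G (n + 1))
    · exact isCyclic_of_prime_card (hp := ⟨Nat.prime_two⟩) hcard
    · exact isCyclic_of_prime_card (hp := ⟨Nat.prime_three⟩) hcard
  exact hne (upperCentralSeries_succ_eq_top_of_isCyclic n)

theorem upperCentralSeries_ne_top_of_isCyclic_map {k : ℕ} (hZ : center G ≠ ⊤)
    (hcyc : IsCyclic ((upperCentralSeries G k).map (mk' (center G)))) :
    upperCentralSeries G k ≠ ⊤ := by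
  intro hk
  rw [hk, map_top_of_surjective _ (mk'_surjective _)] at hcyc
  have : IsCyclic (G ⧸ center G) := (topEquiv.isCyclic).mp hcyc
  have := (mk' (center G)).isMulCommutative_of_isCyclic_of_ker_le_center (ker_mk' _).le
  exact hZ center_eq_top

theorem upperCentralSeries_lt_succ [Group.IsNilpotent G] {k : ℕ}
    (h : upperCentralSeries G k ≠ ⊤) : upperCentralSeries G k < upperCentralSeries G (k + 1) := by
  have hk : k < Group.nilpotencyClass G := by
    by_contra! hle
    exact h (upperCentralSeries_eq_top_iff_nilpotencyClass_le.mpr hle)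
  exact upperCentralSeries.StrictMonoOn G (Set.mem_Iic.mpr hk.le) (Set.mem_Iic.mpr hk)
    k.lt_succ_self

theorem two_lt_card_map_upperCentralSeries_three [Finite G] [Group.IsNilpotent G]
    (h : upperCentralSeries G 2 ≠ ⊤) :
    2 < Nat.card ((upperCentralSeries G 3).map (mk' (center G))) := by
  have h12 : upperCentralSeries G 1 < upperCentralSeries G 2 :=
    upperCentralSeries_lt_succ (ne_top_of_le_ne_top h (upperCentralSeries_mono G (by norm_num)))
  have h23 : upperCentralSeries G 2 < upperCentralSeries G 3 := upperCentralSeries_lt_succ h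
  have hker : (mk' (center G)).ker ≤ upperCentralSeries G 2 := by
    rw [ker_mk']; exact center_le_upperCentralSeries (by norm_num)
  refine two_lt_card_of_bot_lt_of_lt (H := (upperCentralSeries G 2).map (mk' (center G))) ?_ ?_
  · rw [bot_lt_iff_ne_bot, Ne, map_eq_bot_iff, ker_mk', ← upperCentralSeries_one]
    exact h12.not_ge
  · refine (map_mono h23.le).lt_of_ne fun h => h23.ne ?_
    rw [← comap_map_eq_self hker, h, comap_map_eq_self (hker.trans h23.le)]

def IsOrderClosed (N : Subgroup G) (e : ℕ) : Prop :=
  (∀ x ∈ N, orderOf x ∣ 2 ^ e) ∧ ∀ y ∉ center G, 4 ∣ orderOf y → orderOf y ∣ 2 ^ e → y ∈ N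

end Subgroup

open Subgroup

def IsOCGroup (G : Type*) [Group G] : Prop :=
  ∀ x y : G, x ∉ center G → y ∉ center G → orderOf x = orderOf y → IsConj x y

namespace IsOCGroup

variable {G : Type*} [Group G]

theorem isConj_inv (hG : IsOCGroup G) {x : G} (hx : x ∉ center G) : IsConj x x⁻¹ :=
  hG x x⁻¹ hx (by rwa [inv_mem_iff]) (orderOf_inv x).symm

theorem mem_of_orderOf_eq (hG : IsOCGroup G) {N : Subgroup G} [N.Normal] {x y : G} (hx : x ∈ N)
    (hxc : x ∉ center G) (hyc : y ∉ center G) (hxy : orderOf x = orderOf y) : y ∈ N := by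
  obtain ⟨g, rfl⟩ := isConj_iff.mp (hG x y hxc hyc hxy)
  exact Normal.conj_mem inferInstance x hx g

theorem sq_mem_upperCentralSeries (hG : IsOCGroup G) {n : ℕ} {x : G}
    (hx : x ∈ Subgroup.upperCentralSeries G (n + 1)) (hxc : x ∉ center G) :
    x ^ 2 ∈ Subgroup.upperCentralSeries G n := by
  obtain ⟨g, hg⟩ := isConj_iff.mp (hG.isConj_inv hxc)
  have hcomm : x * g * x⁻¹ * g⁻¹ = x ^ 2 := by
    calc x * g * x⁻¹ * g⁻¹ = x * (g * x * g⁻¹)⁻¹ := by group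
    _ = x ^ 2 := by rw [hg, inv_inv, sq]
  have := Subgroup.mem_upperCentralSeries_succ_iff.mp hx g
  rwa [commutatorElement_def, hcomm] at this

theorem pow_four_eq_one_of_mem_upperCentralSeries_two (hG : IsOCGroup G) {x : G}
    (hx : x ∈ Subgroup.upperCentralSeries G 2) (hxc : x ∉ center G) : x ^ 4 = 1 := by
  have hx2 : x ^ 2 ∈ center G := by
    simpa using hG.sq_mem_upperCentralSeries (n := 1) hx hxc
  obtain ⟨g, hg⟩ := isConj_iff.mp (hG.isConj_inv hxc)
  -- conjugation by `g` fixes the central `x ^ 2` and sends it to `x⁻¹ ^ 2`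
  have hinv : x⁻¹ ^ 2 = x ^ 2 := by
    rw [← hg, conj_pow, mem_center_iff.mp hx2 g, mul_inv_cancel_right]
  calc x ^ 4 = x ^ 2 * x⁻¹ ^ 2 := by rw [hinv]; group
  _ = 1 := by group

theorem pow_four_eq_one_of_mem_center (hG : IsOCGroup G) {u z : G}
    (hu : u ∈ Subgroup.upperCentralSeries G 2) (huc : u ∉ center G) (hz : z ∈ center G) :
    z ^ 4 = 1 := by
  have huz : u * z ∉ center G := fun h => huc (by simpa using mul_mem h (inv_mem hz))
  have := hG.pow_four_eq_one_of_mem_upperCentralSeries_two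
    (mul_mem hu (center_le_upperCentralSeries (by norm_num) hz)) huz
  rwa [Commute.mul_pow (mem_center_iff.mp hz u),
    hG.pow_four_eq_one_of_mem_upperCentralSeries_two hu huc, one_mul] at this

theorem orderOf_eq_two_or_eq_of_isOrderClosed (hG : IsOCGroup G) {k e : ℕ} (hk : 1 ≤ k)
    (hN : (Subgroup.upperCentralSeries G k).IsOrderClosed e) {x : G}
    (hx : x ∈ Subgroup.upperCentralSeries G (k + 1))
    (hxk : x ∉ Subgroup.upperCentralSeries G k) :
    orderOf x = 2 ∨ orderOf x = 2 ^ (e + 1) := by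
  have hxc : x ∉ center G := fun h => hxk (center_le_upperCentralSeries hk h)
  have hdvd : orderOf x ∣ 2 ^ (e + 1) := orderOf_dvd_of_pow_eq_one <| by
    rw [pow_succ', pow_mul]
    exact orderOf_dvd_iff_pow_eq_one.mp (hN.1 _ (hG.sq_mem_upperCentralSeries hx hxc))
  refine (Nat.dvd_two_pow_or_eq_of_dvd_two_pow_succ hdvd).imp_left fun hdvd' => ?_
  refine Nat.eq_two_of_dvd_two_pow hdvd' (fun h4 => hxk (hN.2 x hxc h4 hdvd')) fun h1 => ?_
  exact hxk (orderOf_eq_one_iff.mp h1 ▸ one_mem _)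

theorem isOrderClosed_succ (hG : IsOCGroup G) {k e : ℕ} (hk : 1 ≤ k) (he : 1 ≤ e)
    (hN : (Subgroup.upperCentralSeries G k).IsOrderClosed e) :
    (Subgroup.upperCentralSeries G (k + 1)).IsOrderClosed e ∨
      (Subgroup.upperCentralSeries G (k + 1)).IsOrderClosed (e + 1) := by
  have hle := Subgroup.upperCentralSeries_mono G k.le_succ
  have hcen : center G ≤ Subgroup.upperCentralSeries G k := center_le_upperCentralSeries hk
  by_cases hb : ∃ b ∈ Subgroup.upperCentralSeries G (k + 1),
      b ∉ center G ∧ orderOf b = 2 ^ (e + 1)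
  · obtain ⟨b, hbk, hbc, hbo⟩ := hb
    refine Or.inr ⟨fun x hx => ?_, fun y hyc hy4 hy => ?_⟩
    · by_cases hxk : x ∈ Subgroup.upperCentralSeries G k
      · exact (hN.1 x hxk).trans (pow_dvd_pow 2 e.le_succ)
      · rcases hG.orderOf_eq_two_or_eq_of_isOrderClosed hk hN hx hxk with h | h <;> rw [h]
        exact dvd_pow_self 2 e.succ_ne_zero
    · rcases Nat.dvd_two_pow_or_eq_of_dvd_two_pow_succ hy with hy | hy
      · exact hle (hN.2 y hyc hy4 hy)
      · exact hG.mem_of_orderOf_eq hbk hbc hyc (hbo.trans hy.symm)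
  · push Not at hb
    refine Or.inl ⟨fun x hx => ?_, fun y hyc hy4 hy => hle (hN.2 y hyc hy4 hy)⟩
    by_cases hxk : x ∈ Subgroup.upperCentralSeries G k
    · exact hN.1 x hxk
    · rcases hG.orderOf_eq_two_or_eq_of_isOrderClosed hk hN hx hxk with h | h
      · rw [h]; exact dvd_pow_self 2 (by omega)
      · exact absurd h (hb x hx fun hc => hxk (hcen hc))

theorem card_quotient_le_three_of_isOrderClosed [Finite G] (hG : IsOCGroup G) {n e : ℕ}
    (hn : 1 ≤ n) (hN : (Subgroup.upperCentralSeries G n).IsOrderClosed e)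
    (htop : Subgroup.upperCentralSeries G (n + 1) = ⊤) :
    Nat.card (G ⧸ Subgroup.upperCentralSeries G n) ≤ 3 := by
  classical
  set N := Subgroup.upperCentralSeries G n
  have hout : ∀ q : G ⧸ N, q ≠ 1 → q.out ∉ N := fun q hq h =>
    hq (by rw [← out_eq' q]; exact (QuotientGroup.eq_one_iff _).mpr h)
  have hcen : center G ≤ N := center_le_upperCentralSeries hn
  -- a nontrivial coset is determined by the order of its representatives, `2` or `2 ^ (e + 1)`
  let f : G ⧸ N → ℕ := fun q => if q = 1 then 0 else orderOf q.out
  have hmaps : ∀ q, f q ∈ ({0, 2, 2 ^ (e + 1)} : Finset ℕ) := by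
    intro q
    by_cases hq : q = 1
    · simp [f, hq]
    · have := hG.orderOf_eq_two_or_eq_of_isOrderClosed hn hN (htop ▸ mem_top q.out) (hout q hq)
      simp only [f, hq, if_false, Finset.mem_insert, Finset.mem_singleton]
      tauto
  have hinj : Function.Injective f := by
    intro q q' h
    by_cases hq : q = 1 <;> by_cases hq' : q' = 1 <;>
      simp only [f, hq, hq', if_true, if_false] at h
    · rw [hq, hq']
    · exact absurd h.symm (orderOf_pos _).ne'
    · exact absurd h (orderOf_pos _).ne'
    · have hc : IsConj q.out q'.out :=
        hG _ _ (fun hc => hout q hq (hcen hc)) (fun hc => hout q' hq' (hcen hc)) h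
      rw [← out_eq' q, ← out_eq' q', hc.mk_eq_of_mem_upperCentralSeries_succ (htop ▸ mem_top _)]
  calc Nat.card (G ⧸ N) ≤ Nat.card ({0, 2, 2 ^ (e + 1)} : Finset ℕ) :=
        Nat.card_le_card_of_injective (fun q => ⟨f q, hmaps q⟩)
          fun q q' h => hinj (congrArg Subtype.val h)
    _ ≤ 3 := (Nat.card_eq_finsetCard _).trans_le Finset.card_le_three

theorem upperCentralSeries_add_ne_top [Finite G] (hG : IsOCGroup G) {k e : ℕ} (hk : 1 ≤ k)
    (he : 1 ≤ e) (hN : (Subgroup.upperCentralSeries G k).IsOrderClosed e)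
    (hne : Subgroup.upperCentralSeries G k ≠ ⊤) (m : ℕ) :
    Subgroup.upperCentralSeries G (k + m) ≠ ⊤ := by
  induction m generalizing k e with
  | zero => exact hne
  | succ m ih =>
    obtain ⟨n, rfl⟩ : ∃ n, k = n + 1 := ⟨k - 1, by omega⟩
    have hne' : Subgroup.upperCentralSeries G (n + 1 + 1) ≠ ⊤ := fun htop =>
      hne (upperCentralSeries_succ_eq_top_of_card_quotient_le_three n
        (hG.card_quotient_le_three_of_isOrderClosed hk hN htop))
    rw [show n + 1 + (m + 1) = n + 1 + 1 + m by omega]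
    rcases hG.isOrderClosed_succ hk he hN with h | h
    exacts [ih (by omega) he h hne', ih (by omega) (by omega) h hne']

theorem not_isNilpotent [Finite G] (hG : IsOCGroup G) {k e : ℕ} (hk : 1 ≤ k) (he : 1 ≤ e)
    (hN : (Subgroup.upperCentralSeries G k).IsOrderClosed e)
    (hne : Subgroup.upperCentralSeries G k ≠ ⊤) : ¬ Group.IsNilpotent G := by
  rintro ⟨m, hm⟩
  exact hG.upperCentralSeries_add_ne_top hk he hN hne m
    (eq_top_iff.mpr (hm ▸ Subgroup.upperCentralSeries_mono G (Nat.le_add_left m k)))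

theorem isOrderClosed_three (hG : IsOCGroup G) {w : G}
    (hw : w ∈ Subgroup.upperCentralSeries G 3) (hw2 : w ^ 2 ∉ center G)
    (hgen : ∀ x ∈ Subgroup.upperCentralSeries G 3,
      (x : G ⧸ center G) ∈ zpowers (w : G ⧸ center G)) :
    ∃ e, 1 ≤ e ∧ (Subgroup.upperCentralSeries G 3).IsOrderClosed e := by
  have hwc : w ∉ center G := fun h => hw2 (pow_mem h 2)
  have hw2Z : w ^ 2 ∈ Subgroup.upperCentralSeries G 2 := hG.sq_mem_upperCentralSeries hw hwc
  obtain ⟨f, hf3, hwo⟩ := (Nat.dvd_prime_pow Nat.prime_two).mp <|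
    orderOf_dvd_of_pow_eq_one (x := w) (n := 2 ^ 3) <| by
      rw [show 2 ^ 3 = 2 * 4 by norm_num, pow_mul]
      exact hG.pow_four_eq_one_of_mem_upperCentralSeries_two hw2Z hw2
  have hf2 : 2 ≤ f := by
    by_contra! hf
    have : w ^ 2 = 1 := orderOf_dvd_iff_pow_eq_one.mp <| by
      rw [hwo]; exact (pow_dvd_pow 2 (show f ≤ 1 by omega)).trans (pow_one 2).dvd
    exact hw2 (this ▸ one_mem _)
  have hcen : ∀ z ∈ center G, orderOf z ∣ 2 ^ f := fun z hz =>
    (orderOf_dvd_of_pow_eq_one (hG.pow_four_eq_one_of_mem_center hw2Z hw2 hz)).trans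
      (pow_dvd_pow 2 hf2)
  refine ⟨f, by omega, fun x hx => ?_, fun y hyc hy4 hy => ?_⟩
  · obtain ⟨k, hk⟩ := mem_zpowers_iff.mp (hgen x hx)
    have hz : (w ^ k)⁻¹ * x ∈ center G := QuotientGroup.eq.mp (by rw [QuotientGroup.mk_zpow, hk])
    rw [← mul_inv_cancel_left (w ^ k) x]
    refine (Commute.orderOf_mul_dvd_lcm (mem_center_iff.mp hz (w ^ k))).trans ?_
    exact Nat.lcm_dvd ((orderOf_dvd_of_mem_zpowers (zpow_mem_zpowers w k)).trans hwo.dvd)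
      (hcen _ hz)
  · obtain ⟨j, hj, hyo⟩ := (Nat.dvd_prime_pow Nat.prime_two).mp hy
    have hj2 : 2 ≤ j := Nat.pow_dvd_pow_iff_le_right'.mp (hyo ▸ hy4)
    rcases hj.eq_or_lt with rfl | hlt
    · exact hG.mem_of_orderOf_eq hw hwc hyc (hwo.trans hyo.symm)
    · have hw2o : orderOf (w ^ 2) = orderOf y := by
        rw [orderOf_pow_of_dvd two_ne_zero (hwo ▸ dvd_pow_self 2 (by omega)), hwo, hyo,
          show f = 3 by omega, show j = 2 by omega]
        norm_num
      exact hG.mem_of_orderOf_eq (pow_mem hw 2) hw2 hyc hw2o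

theorem exists_isOrderClosed_three [Finite G] [Group.IsNilpotent G] (hG : IsOCGroup G)
    (h2 : Subgroup.upperCentralSeries G 2 ≠ ⊤)
    (hcyc : IsCyclic ((Subgroup.upperCentralSeries G 3).map (QuotientGroup.mk' (center G)))) :
    ∃ e, 1 ≤ e ∧ (Subgroup.upperCentralSeries G 3).IsOrderClosed e := by
  obtain ⟨q, hq⟩ := (Subgroup.isCyclic_iff_exists_zpowers_eq_top _).mp hcyc
  obtain ⟨w, hw, rfl⟩ := mem_map.mp (hq ▸ mem_zpowers q)
  refine hG.isOrderClosed_three hw (fun hw2 => ?_) fun x hx => hq ▸ mem_map_of_mem _ hx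
  have hcard := two_lt_card_map_upperCentralSeries_three h2
  rw [← hq, Nat.card_zpowers] at hcard
  refine hcard.not_ge (orderOf_le_of_pow_eq_one two_pos ?_)
  rw [← map_pow, QuotientGroup.mk'_apply, QuotientGroup.eq_one_iff]
  exact hw2

end IsOCGroup

end

theorem third_center_mod_center_not_cyclic_general (G : Type) [Group G] [Finite G]
    (hG2 : IsPGroup 2 G)
    (hOC : ∀ x y : G, x ∉ Subgroup.center G → y ∉ Subgroup.center G →
      orderOf x = orderOf y → IsConj x y)
    (h2 : Subgroup.center G < ⊤) :
    ¬ IsCyclic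
      (Subgroup.map (QuotientGroup.mk' (Subgroup.center G)) (upperCentralSeries G 3)) := by
  intro hcyc
  have : Fact (Nat.Prime 2) := ⟨Nat.prime_two⟩
  have hnil : Group.IsNilpotent G := hG2.isNilpotent
  have h3 : Subgroup.upperCentralSeries G 3 ≠ ⊤ :=
    Subgroup.upperCentralSeries_ne_top_of_isCyclic_map h2.ne hcyc
  have h2' : Subgroup.upperCentralSeries G 2 ≠ ⊤ :=
    ne_top_of_le_ne_top h3 (Subgroup.upperCentralSeries_mono G (by norm_num))
  obtain ⟨e, he, hN⟩ := IsOCGroup.exists_isOrderClosed_three hOC h2' hcyc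
  exact IsOCGroup.not_isNilpotent hOC (by norm_num) he hN h3 hnil

/-- **Claim 5 in Lemma 2.6.** Let `G` be a finite 2-group which is a
non-trivial OC-group.  Then `Z₃(G) / Z(G)` (the image of the third center in
`G / Z(G)`) is not cyclic. -/
theorem third_center_mod_center_not_cyclic (G : Type) [Group G] [Finite G]
    (hG2 : IsPGroup 2 G)
    (hOC : ∀ x y : G, x ∉ Subgroup.center G → y ∉ Subgroup.center G →
      orderOf x = orderOf y → IsConj x y)
    (h1 : ⊥ < Subgroup.center G) (h2 : Subgroup.center G < ⊤) :
    ¬ IsCyclic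
      (Subgroup.map (QuotientGroup.mk' (Subgroup.center G)) (upperCentralSeries G 3)) :=
  third_center_mod_center_not_cyclic_general G hG2 hOC h2
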